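/- arXiv:2305.18488 — 2 statements merged into one kernel-verified Lean document; each statement's English description precedes it below -/
import Mathlib

section
/- Let $\beta_1,\dots,\beta_s$ be i.i.d. random variables with the standard Laplace distribution (density $\frac{1}{2}e^{-|x|}$). Then for any fixed vector $\beta_0 \in \mathbb{R}^s$ and any $\epsilon>0$, the probability that $\|\beta - \beta_0\|_1 \le \epsilon$ is at least $\exp(-\|\beta_0\|_1 - \epsilon - s\log(s/\epsilon))$, where $\beta = (\beta_1,\dots,\beta_s)$. -/
open MeasureTheory ProbabilityTheory Real

/-- The standard Laplace distribution on `ℝ`, with density `(1/2) * exp (-|x|)`. -/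
noncomputable def laplaceMeasure : Measure ℝ :=
  volume.withDensity (fun x => ENNReal.ofReal ((1 / 2) * Real.exp (-|x|)))

/-!
The `ℓ¹` ball of radius `ε` around `β₀` contains the cube of half-width `δ = ε / s`, which avoids
the Gamma distribution function altogether. By independence the cube has probability
`∏ i, P(|β i - β₀ i| ≤ δ)`, and on each interval the Laplace density is at least
`exp (-|β₀ i| - δ) / 2`, so each factor is at least `δ * exp (-|β₀ i| - δ)`. The product is
`δ ^ s * exp (-‖β₀‖₁ - ε)`, which is exactly the claimed bound.
-/

lemma ofReal_mul_exp_le_laplaceMeasure_closedBall (b δ : ℝ) :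
    ENNReal.ofReal (δ * exp (-|b| - δ)) ≤ laplaceMeasure (Metric.closedBall b δ) := by
  have density_ge : ∀ x ∈ Metric.closedBall b δ,
      ENNReal.ofReal (1 / 2 * exp (-|b| - δ)) ≤ ENNReal.ofReal (1 / 2 * exp (-|x|)) := by
    intro x hx
    have : |x| ≤ |b| + δ := by
      have := abs_sub_abs_le_abs_sub x b
      rw [Metric.mem_closedBall, Real.dist_eq] at hx
      linarith
    gcongr
    linarith
  rw [laplaceMeasure, withDensity_apply _ measurableSet_closedBall]
  calc ENNReal.ofReal (δ * exp (-|b| - δ))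
      = ∫⁻ _ in Metric.closedBall b δ, ENNReal.ofReal (1 / 2 * exp (-|b| - δ)) := by
        rw [setLIntegral_const, Real.volume_closedBall, ← ENNReal.ofReal_mul (by positivity)]
        ring_nf
    _ ≤ _ := setLIntegral_mono (by fun_prop) density_ge

lemma ofReal_prod_le_measure_forall_abs_sub_le {ι Ω : Type*} [Fintype ι] [MeasurableSpace Ω]
    {μ : Measure Ω} {β : ι → Ω → ℝ} (hmeas : ∀ i, Measurable (β i)) (hindep : iIndepFun β μ)
    (hlaw : ∀ i, μ.map (β i) = laplaceMeasure) (β₀ : ι → ℝ) {δ : ℝ} (hδ : 0 ≤ δ) :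
    ENNReal.ofReal (∏ i, δ * exp (-|β₀ i| - δ)) ≤ μ {ω | ∀ i, |β i ω - β₀ i| ≤ δ} := by
  have cube_eq : {ω | ∀ i, |β i ω - β₀ i| ≤ δ} = ⋂ i, β i ⁻¹' Metric.closedBall (β₀ i) δ := by
    ext ω
    simp [Real.dist_eq]
  have coord_ge (i : ι) :
      ENNReal.ofReal (δ * exp (-|β₀ i| - δ)) ≤ μ (β i ⁻¹' Metric.closedBall (β₀ i) δ) := by
    rw [← Measure.map_apply (hmeas i) measurableSet_closedBall, hlaw i]
    exact ofReal_mul_exp_le_laplaceMeasure_closedBall (β₀ i) δ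
  rw [cube_eq, hindep.meas_iInter fun i => ⟨_, measurableSet_closedBall, rfl⟩,
    ENNReal.ofReal_prod_of_nonneg fun i _ => by positivity]
  exact Finset.prod_le_prod' fun i _ => coord_ge i

lemma prod_mul_exp_neg_sub_eq {ι : Type*} [Fintype ι] (a : ι → ℝ) {δ : ℝ} (hδ : 0 < δ) :
    ∏ i, δ * exp (-a i - δ) =
      exp (-(∑ i, a i) - Fintype.card ι * δ - Fintype.card ι * log δ⁻¹) := by
  rw [Finset.prod_mul_distrib, Finset.prod_const, ← exp_sum, Finset.card_univ,
    ← exp_log (pow_pos hδ _), ← exp_add, log_pow, log_inv, Finset.sum_sub_distrib,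
    Finset.sum_neg_distrib, Finset.sum_const, Finset.card_univ, nsmul_eq_mul]
  ring_nf

/-- If `β 1, ..., β s` are i.i.d. standard Laplace random variables, then for any fixed
`β₀ ∈ ℝ^s` and any `ε > 0`, the probability that `‖β - β₀‖₁ ≤ ε` is at least
`exp (-‖β₀‖₁ - ε - s * log (s / ε))`. -/
theorem laplace_l1_ball_prob_ge
    {Ω : Type*} [MeasureSpace Ω] [IsProbabilityMeasure (ℙ : Measure Ω)]
    (s : ℕ) (hs : 1 ≤ s) (β : Fin s → Ω → ℝ)
    (hmeas : ∀ i, Measurable (β i))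
    (hindep : iIndepFun β ℙ)
    (hlaw : ∀ i, Measure.map (β i) ℙ = laplaceMeasure)
    (β₀ : Fin s → ℝ) (ε : ℝ) (hε : 0 < ε) :
    Real.exp (-(∑ i, |β₀ i|) - ε - s * Real.log (s / ε)) ≤
      (ℙ {ω | ∑ i, |β i ω - β₀ i| ≤ ε}).toReal := by
  have hs_pos : (0 : ℝ) < s := by exact_mod_cast hs
  have hδ : 0 < ε / s := div_pos hε hs_pos
  have bound_eq : exp (-(∑ i, |β₀ i|) - ε - s * log (s / ε)) =
      ∏ i, ε / s * exp (-|β₀ i| - ε / s) := by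
    rw [prod_mul_exp_neg_sub_eq _ hδ, Fintype.card_fin, inv_div, mul_div_cancel₀ _ hs_pos.ne']
  have cube_subset : {ω | ∀ i, |β i ω - β₀ i| ≤ ε / s} ⊆ {ω | ∑ i, |β i ω - β₀ i| ≤ ε} := by
    intro ω hω
    calc ∑ i, |β i ω - β₀ i| ≤ ∑ _i : Fin s, ε / s := Finset.sum_le_sum fun i _ => hω i
      _ = ε := by simp [mul_div_cancel₀ _ hs_pos.ne']
  rw [← ENNReal.ofReal_le_iff_le_toReal (measure_ne_top _ _), bound_eq]
  exact (ofReal_prod_le_measure_forall_abs_sub_le hmeas hindep hlaw β₀ hδ.le).trans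
    (measure_mono cube_subset)
end

section
/- Let $B \in \mathbb{R}^{p \times q}$, $B^\star \in \mathbb{R}^{p \times r}$ be matrices and $\psi, \psi^\star > 0$ scalars. Set $\Sigma = BB^\top + \psi I_p$ and $\Sigma^\star = B^\star(B^\star)^\top + \psi^\star I_p$. If $q + r \le p$, then $\|BB^\top - B^\star(B^\star)^\top\| \le 2\|\Sigma - \Sigma^\star\|$, where $\|\cdot\|$ denotes the spectral (operator) norm. -/
/-!
If `Bᵀ w = 0` and `B⋆ᵀ w = 0` for some `w ≠ 0` (such a `w` exists by counting dimensions of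
the two kernels), then `(Σ - Σ⋆) w = (ψ - ψ⋆) w`, so `|ψ - ψ⋆| ≤ ‖Σ - Σ⋆‖`. Since
`BBᵀ - B⋆B⋆ᵀ = (Σ - Σ⋆) - (ψ - ψ⋆) I`, the triangle inequality gives the factor `2`.
-/

open Matrix

/-- The spectral (ℓ²-operator) norm of a real matrix. -/
noncomputable def matSpectralNorm {p q : ℕ} (M : Matrix (Fin p) (Fin q) ℝ) : ℝ :=
  ‖(Matrix.toEuclideanLin M).toContinuousLinearMap‖

open Module

section CommonKernel

variable {K m n m' : Type*} [Field K] [Fintype n]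

theorem Matrix.rank_add_finrank_ker_mulVecLin (A : Matrix m n K) :
    A.rank + finrank K (LinearMap.ker A.mulVecLin) = Fintype.card n := by
  rw [Matrix.rank, LinearMap.finrank_range_add_finrank_ker, finrank_fintype_fun_eq_card]

theorem Matrix.exists_ne_zero_mulVec_eq_zero_of_rank_add_rank_lt
    (A : Matrix m n K) (C : Matrix m' n K) (h : A.rank + C.rank < Fintype.card n) :
    ∃ w, w ≠ 0 ∧ A *ᵥ w = 0 ∧ C *ᵥ w = 0 := by
  by_contra! hw
  have hdisj : Disjoint (LinearMap.ker A.mulVecLin) (LinearMap.ker C.mulVecLin) :=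
    Submodule.disjoint_def.mpr fun w hA hC => by_contra fun hw0 => hw w hw0 hA hC
  have hker := Submodule.finrank_add_finrank_le_of_disjoint hdisj
  have hA := A.rank_add_finrank_ker_mulVecLin
  have hC := C.rank_add_finrank_ker_mulVecLin
  rw [finrank_fintype_fun_eq_card] at hker
  omega

end CommonKernel

section SpectralNorm

variable {p : ℕ}

theorem matSpectralNorm_sub_le (M N : Matrix (Fin p) (Fin p) ℝ) :
    matSpectralNorm (M - N) ≤ matSpectralNorm M + matSpectralNorm N := by
  simp only [matSpectralNorm, map_sub]
  exact norm_sub_le _ _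

theorem matSpectralNorm_smul_one_le (c : ℝ) :
    matSpectralNorm (c • (1 : Matrix (Fin p) (Fin p) ℝ)) ≤ |c| := by
  refine ContinuousLinearMap.opNorm_le_bound _ (abs_nonneg c) fun x => ?_
  have hx : toEuclideanLin (c • (1 : Matrix (Fin p) (Fin p) ℝ)) x = c • x := by simp
  rw [LinearMap.coe_toContinuousLinearMap', hx, norm_smul, Real.norm_eq_abs]

theorem abs_le_matSpectralNorm_of_mulVec_eq_smul (M : Matrix (Fin p) (Fin p) ℝ) {w : Fin p → ℝ}
    (hw : w ≠ 0) {c : ℝ} (hMw : M *ᵥ w = c • w) : |c| ≤ matSpectralNorm M := by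
  have hMw' : toEuclideanLin M (WithLp.toLp 2 w) = c • WithLp.toLp 2 w := by
    rw [toLpLin_toLp, toLin'_apply, hMw, WithLp.toLp_smul]
  have hpos : 0 < ‖WithLp.toLp 2 w‖ := norm_pos_iff.mpr (by simpa using hw)
  refine le_of_mul_le_mul_right ?_ hpos
  simpa [matSpectralNorm, hMw', norm_smul] using
    (toEuclideanLin M).toContinuousLinearMap.le_opNorm (WithLp.toLp 2 w)

theorem matSpectralNorm_le_two_mul_of_mulVec_eq_zero (D : Matrix (Fin p) (Fin p) ℝ) (c : ℝ)
    {w : Fin p → ℝ} (hw : w ≠ 0) (hDw : D *ᵥ w = 0) :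
    matSpectralNorm D ≤ 2 * matSpectralNorm (D + c • 1) := by
  have hc : |c| ≤ matSpectralNorm (D + c • 1) :=
    abs_le_matSpectralNorm_of_mulVec_eq_smul _ hw <| by
      rw [add_mulVec, hDw, smul_mulVec, one_mulVec, zero_add]
  calc matSpectralNorm D = matSpectralNorm (D + c • 1 - c • 1) := by rw [add_sub_cancel_right]
    _ ≤ matSpectralNorm (D + c • 1) + matSpectralNorm (c • 1) := matSpectralNorm_sub_le _ _
    _ ≤ 2 * matSpectralNorm (D + c • 1) := by linarith [matSpectralNorm_smul_one_le (p := p) c]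

end SpectralNorm

theorem spectralNorm_lowRank_diff_le_general
    {p q r : ℕ} (B : Matrix (Fin p) (Fin q) ℝ) (Bs : Matrix (Fin p) (Fin r) ℝ)
    (ψ ψs : ℝ)
    (hrank : B.rank + Bs.rank < p) :
    matSpectralNorm (B * Bᵀ - Bs * Bsᵀ) ≤
      2 * matSpectralNorm ((B * Bᵀ + ψ • (1 : Matrix (Fin p) (Fin p) ℝ)) -
        (Bs * Bsᵀ + ψs • (1 : Matrix (Fin p) (Fin p) ℝ))) := by
  obtain ⟨w, hw, hBw, hBsw⟩ := Bᵀ.exists_ne_zero_mulVec_eq_zero_of_rank_add_rank_lt Bsᵀ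
    (by rwa [rank_transpose, rank_transpose, Fintype.card_fin])
  have hDw : (B * Bᵀ - Bs * Bsᵀ) *ᵥ w = 0 := by
    rw [sub_mulVec, ← mulVec_mulVec, ← mulVec_mulVec, hBw, hBsw, mulVec_zero, mulVec_zero, sub_zero]
  have hSigma : (B * Bᵀ + ψ • (1 : Matrix (Fin p) (Fin p) ℝ)) - (Bs * Bsᵀ + ψs • 1) =
      (B * Bᵀ - Bs * Bsᵀ) + (ψ - ψs) • 1 := by
    rw [sub_smul]; abel
  rw [hSigma]
  exact matSpectralNorm_le_two_mul_of_mulVec_eq_zero _ _ hw hDw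

/-- If `Σ = BBᵀ + ψI` and `Σ⋆ = B⋆(B⋆)ᵀ + ψ⋆I` with `rank B + rank B⋆ < p`, then
`‖BBᵀ - B⋆(B⋆)ᵀ‖ ≤ 2‖Σ - Σ⋆‖` in spectral norm. -/
theorem spectralNorm_lowRank_diff_le
    {p q r : ℕ} (B : Matrix (Fin p) (Fin q) ℝ) (Bs : Matrix (Fin p) (Fin r) ℝ)
    (ψ ψs : ℝ) (hψ : 0 < ψ) (hψs : 0 < ψs)
    (hrank : B.rank + Bs.rank < p) :
    matSpectralNorm (B * Bᵀ - Bs * Bsᵀ) ≤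
      2 * matSpectralNorm ((B * Bᵀ + ψ • (1 : Matrix (Fin p) (Fin p) ℝ)) -
        (Bs * Bsᵀ + ψs • (1 : Matrix (Fin p) (Fin p) ℝ))) :=
  spectralNorm_lowRank_diff_le_general B Bs ψ ψs hrank
end
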